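/- arXiv:1110.1030 — 6 statements merged into one kernel-verified Lean document; each statement's English description precedes it below -/
import Mathlib

section
/- Let n ≥ 2 be an even integer. Then A_n = { m ∈ ℤ : m is even and m ≥ n }. -/
/-- For an integer `n ≥ 2`, `A n = { l*(n+2*j) : l, j ∈ ℤ, 1 ≤ l ≤ j+1 }`. -/
def Aset (n : ℤ) : Set ℤ :=
  {m : ℤ | ∃ l j : ℤ, 1 ≤ l ∧ l ≤ j + 1 ∧ m = l * (n + 2 * j)}

/-- If `n ≥ 2` is even, then `A_n = {m even : m ≥ n}`. -/
theorem stmt0 (n : ℤ) (hn : 2 ≤ n) (hne : Even n) :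
    Aset n = {m : ℤ | Even m ∧ n ≤ m} := by
  ext m
  simp only [Aset, Set.mem_setOf_eq]
  constructor
  · rintro ⟨l, j, hl, hlj, rfl⟩
    obtain ⟨k, hk⟩ := hne
    constructor
    · exact ⟨l * (k + j), by rw [hk]; ring⟩
    · have hj : 0 ≤ j := by linarith
      have h1 : n ≤ n + 2 * j := by linarith
      have h2 : n + 2 * j ≤ l * (n + 2 * j) := le_mul_of_one_le_left (by linarith) hl
      linarith
  · rintro ⟨⟨k, hk⟩, hm⟩
    obtain ⟨c, hc⟩ := hne
    refine ⟨1, k - c, le_refl 1, by omega, by omega⟩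
end

section
/- Let n ≥ 3 be an odd integer. Then A_n = { 2^r · a : r ∈ ℤ, r ≥ 0, a ∈ ℤ, a odd, a ≥ n + 2^{r+1} − 2 }. -/
theorem Int.exists_eq_two_pow_mul_odd_of_pos {l : ℤ} (hl : 0 < l) :
    ∃ (r : ℕ) (b : ℤ), Odd b ∧ 0 < b ∧ l = 2 ^ r * b := by
  lift l to ℕ using hl.le
  obtain ⟨r, b, hb, rfl⟩ := Nat.exists_eq_two_pow_mul_odd (by omega : l ≠ 0)
  exact ⟨r, b, by exact_mod_cast hb, by exact_mod_cast hb.pos, by push_cast; rfl⟩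

theorem exists_two_pow_mul_odd_of_mem_Aset {n m : ℤ} (hn : 0 ≤ n) (hno : Odd n)
    (hm : m ∈ Aset n) :
    ∃ (r : ℕ) (a : ℤ), Odd a ∧ n + 2 ^ (r + 1) - 2 ≤ a ∧ m = 2 ^ r * a := by
  obtain ⟨l, j, hl, hlj, rfl⟩ := hm
  obtain ⟨r, b, hb, hb0, rfl⟩ := Int.exists_eq_two_pow_mul_odd_of_pos hl
  have hpow : (1 : ℤ) ≤ 2 ^ r := one_le_pow₀ one_le_two
  have hfactor : n + 2 ^ (r + 1) - 2 ≤ n + 2 * j := by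
    have : (2 : ℤ) ^ r ≤ 2 ^ r * b := le_mul_of_one_le_right (by positivity) hb0
    rw [pow_succ]
    linarith
  refine ⟨r, b * (n + 2 * j), hb.mul (hno.add_even (even_two_mul j)), ?_, by ring⟩
  calc n + 2 ^ (r + 1) - 2 ≤ n + 2 * j := hfactor
    _ ≤ b * (n + 2 * j) := le_mul_of_one_le_left (by rw [pow_succ] at hfactor; linarith) hb0

theorem two_pow_mul_mem_Aset {n a : ℤ} {r : ℕ} (hno : Odd n) (ha : Odd a)
    (h : n + 2 ^ (r + 1) - 2 ≤ a) : 2 ^ r * a ∈ Aset n := by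
  obtain ⟨j, hj⟩ := ha.sub_odd hno
  refine ⟨2 ^ r, j, one_le_pow₀ one_le_two, ?_, by rw [show n + 2 * j = a by linarith]⟩
  rw [pow_succ] at h
  linarith

/-- If `n ≥ 3` is odd, then
`A_n = { 2^r * a : r ∈ ℤ, r ≥ 0, a odd, a ≥ n + 2^(r+1) - 2 }`. -/
theorem stmt1 (n : ℤ) (hn : 3 ≤ n) (hno : Odd n) :
    Aset n = {m : ℤ | ∃ (r : ℕ) (a : ℤ), Odd a ∧ n + 2 ^ (r + 1) - 2 ≤ a ∧
      m = 2 ^ r * a} := by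
  ext m
  constructor
  · exact exists_two_pow_mul_odd_of_mem_Aset (by omega) hno
  · rintro ⟨r, a, ha, h, rfl⟩
    exact two_pow_mul_mem_Aset hno ha h
end

section
/- Let n ≥ 1 and k ≥ 0 be integers, let h : ℝⁿ → ℂ be a harmonic polynomial homogeneous of degree k, and set c_{k,n} := 1/(2k+n−2) if (k,n) ≠ (0,2) and c_{0,2} := 0. Then for every j ∈ {1,…,n}, the function y ↦ y_j h(y) − c_{k,n} ‖y‖² (∂h/∂y_j)(y) is a harmonic polynomial homogeneous of degree k+1. -/
/-!
Write `h` as the evaluation at real points of a complex polynomial `p` and set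
`q = X j * p - c • (‖X‖² * ∂ⱼ p)`. Scaling the derivative, `t • dh(t • y) = tᵏ • dh(y)`, so
`∂ⱼ h` has degree `k - 1` and `q` has degree `k + 1`. For harmonicity, the Leibniz rule for the
Laplacian gives `Δ(X j * p) = 2 ∂ⱼ p + X j * Δp` and
`Δ(‖X‖² ∂ⱼ p) = 2n ∂ⱼ p + 4 E(∂ⱼ p) + ‖X‖² ∂ⱼ(Δp)`, with `E = ∑ Xᵢ ∂ᵢ` the Euler operator.
Differentiating `h (t • y) = tᵏ h y` at `t = 1` gives `E p = k p` on `ℝⁿ`, and differentiating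
that in `yⱼ` gives `E(∂ⱼ p) = (k - 1) ∂ⱼ p`. Hence `Δq = 2 (1 - c (2k + n - 2)) ∂ⱼ p`, which
vanishes by the choice of `c`; in the exceptional case `k = 0`, `h` is constant.
-/

noncomputable section

/-- `n`-dimensional Euclidean space. -/
abbrev E (n : ℕ) := EuclideanSpace ℝ (Fin n)

/-- Partial derivative in the `j`-th coordinate direction. -/
noncomputable def pd {n : ℕ} (j : Fin n) (f : E n → ℂ) (y : E n) : ℂ :=
  fderiv ℝ f y (EuclideanSpace.single j 1)

/-- The Laplacian `Δ = ∑ⱼ ∂²/∂yⱼ²`. -/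
noncomputable def lap {n : ℕ} (f : E n → ℂ) (y : E n) : ℂ :=
  ∑ j : Fin n, pd j (pd j f) y

/-- `h : ℝⁿ → ℂ` is a harmonic polynomial, homogeneous of degree `k`:
it is given by a polynomial in the coordinates, `h (t • y) = t^k * h y`,
and `Δ h = 0`. -/
def IsHarmonicHomog {n : ℕ} (k : ℕ) (h : E n → ℂ) : Prop :=
  (∃ p : MvPolynomial (Fin n) ℂ, ∀ y : E n, h y = MvPolynomial.eval (fun j => ((y j : ℝ) : ℂ)) p) ∧
  (∀ (t : ℝ) (y : E n), h (t • y) = (t : ℂ) ^ k * h y) ∧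
  (∀ y : E n, lap h y = 0)

/-- The constant `c_{k,n}`: `1/(2k+n-2)` unless `(k,n) = (0,2)`, where it is `0`. -/
noncomputable def ckn (k n : ℕ) : ℂ :=
  if k = 0 ∧ n = 2 then 0 else 1 / (2 * (k : ℂ) + (n : ℂ) - 2)

namespace MvPolynomial

variable {R σ : Type*} [CommRing R] [Fintype σ]

def laplacian : MvPolynomial σ R →ₗ[R] MvPolynomial σ R :=
  ∑ i, (pderiv i).toLinearMap ∘ₗ (pderiv i).toLinearMap

def eulerOperator (p : MvPolynomial σ R) : MvPolynomial σ R :=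
  ∑ i, X i * pderiv i p

def sumSq : MvPolynomial σ R :=
  ∑ i, X i ^ 2

theorem laplacian_apply (p : MvPolynomial σ R) : laplacian p = ∑ i, pderiv i (pderiv i p) := by
  simp [laplacian]

omit [Fintype σ] in
theorem pderiv_comm (i j : σ) (p : MvPolynomial σ R) :
    pderiv i (pderiv j p) = pderiv j (pderiv i p) := by
  classical
  induction p using MvPolynomial.induction_on with
  | C a => simp
  | add p q hp hq => simp [hp, hq]
  | mul_X p l hp =>
    simp only [pderiv_mul, pderiv_X, map_add, hp, Pi.single_apply]
    split_ifs <;> simp only [mul_one, mul_zero, map_zero, add_zero, Derivation.map_one_eq_zero]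
    ring

theorem pderiv_laplacian (j : σ) (p : MvPolynomial σ R) :
    pderiv j (laplacian p) = laplacian (pderiv j p) := by
  simp only [laplacian_apply, map_sum, pderiv_comm j]

theorem pderiv_eulerOperator (j : σ) (p : MvPolynomial σ R) :
    pderiv j (eulerOperator p) = pderiv j p + eulerOperator (pderiv j p) := by
  classical
  simp [eulerOperator, pderiv_X, Pi.single_apply, Finset.sum_add_distrib, pderiv_comm j, add_comm]

theorem laplacian_mul (p q : MvPolynomial σ R) :
    laplacian (p * q) = laplacian p * q + 2 * ∑ i, pderiv i p * pderiv i q + p * laplacian q := by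
  simp only [laplacian_apply, Finset.mul_sum, Finset.sum_mul, ← Finset.sum_add_distrib]
  refine Finset.sum_congr rfl fun i _ => ?_
  simp only [pderiv_mul, map_add]
  ring

theorem laplacian_X_mul (j : σ) (p : MvPolynomial σ R) :
    laplacian (X j * p) = 2 * pderiv j p + X j * laplacian p := by
  classical
  rw [laplacian_mul]
  simp [laplacian_apply, pderiv_X, Pi.single_apply, apply_ite (pderiv _)]

theorem pderiv_sumSq (i : σ) : pderiv i (sumSq : MvPolynomial σ R) = 2 * X i := by
  classical
  simp [sumSq, pderiv_X, Pi.single_apply]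

theorem laplacian_sumSq_mul (p : MvPolynomial σ R) :
    laplacian (sumSq * p) =
      2 * (Fintype.card σ : MvPolynomial σ R) * p + 4 * eulerOperator p + sumSq * laplacian p := by
  have h2 (i : σ) : pderiv i (2 : MvPolynomial σ R) = 0 := by
    exact_mod_cast (pderiv i).map_natCast 2
  rw [laplacian_mul]
  simp only [laplacian_apply, pderiv_sumSq, Derivation.leibniz, pderiv_X_self, smul_eq_mul, mul_one,
    h2, mul_zero, add_zero, Finset.sum_const, Finset.card_univ, nsmul_eq_mul, Finset.mul_sum,
    eulerOperator, add_left_inj]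
  ring_nf

end MvPolynomial

open MvPolynomial

section Homogeneous

variable {V : Type*} [NormedAddCommGroup V] [NormedSpace ℝ V] {f : V → ℂ} {k : ℕ}

theorem smul_fderiv_smul_of_homog (hf : ∀ (t : ℝ) (y : V), f (t • y) = (t : ℂ) ^ k * f y)
    (hd : Differentiable ℝ f) (t : ℝ) (y : V) :
    t • fderiv ℝ f (t • y) = (t : ℂ) ^ k • fderiv ℝ f y := by
  rw [← fderiv_comp_smul, ← fderiv_const_mul (hd y)]
  exact congrArg (fderiv ℝ · y) (funext (hf t))

theorem fderiv_apply_self_of_homog (hf : ∀ (t : ℝ) (y : V), f (t • y) = (t : ℂ) ^ k * f y)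
    (hd : Differentiable ℝ f) (y : V) :
    fderiv ℝ f y y = k * f y := by
  have hline : HasDerivAt (fun t : ℝ => f (t • y)) (fderiv ℝ f y y) 1 := by
    have := (hd ((1 : ℝ) • y)).hasFDerivAt.comp_hasDerivAt 1
      ((hasDerivAt_id (1 : ℝ)).smul_const y)
    simpa only [one_smul, Function.comp_def, id] using this
  have hpow : HasDerivAt (fun t : ℝ => (t : ℂ) ^ k * f y) (k * f y) 1 := by
    simpa using ((hasDerivAt_id (1 : ℝ)).ofReal_comp.pow k).mul_const (f y)
  exact hline.unique (by simpa only [hf] using hpow)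

theorem fderiv_eq_zero_of_homog_zero (hf : ∀ (t : ℝ) (y : V), f (t • y) = (t : ℂ) ^ 0 * f y)
    (y : V) : fderiv ℝ f y = 0 := by
  have hconst : f = fun _ => f 0 := funext fun z => by simpa using (hf 0 z).symm
  rw [hconst, fderiv_const_apply]

end Homogeneous

section EvalReal

variable {n : ℕ}

def evalReal : MvPolynomial (Fin n) ℂ →ₐ[ℂ] (E n → ℂ) :=
  aeval fun i y => ((y i : ℝ) : ℂ)

theorem evalReal_apply (p : MvPolynomial (Fin n) ℂ) (y : E n) :
    evalReal p y = eval (fun i => ((y i : ℝ) : ℂ)) p := by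
  change Pi.evalAlgHom ℂ (fun _ => ℂ) y (aeval _ p) = _
  rw [← AlgHom.comp_apply, comp_aeval]
  rfl

theorem evalReal_X (i : Fin n) : evalReal (X i) = fun y : E n => ((y i : ℝ) : ℂ) :=
  aeval_X _ i

theorem differentiable_evalReal (p : MvPolynomial (Fin n) ℂ) : Differentiable ℝ (evalReal p) := by
  induction p using MvPolynomial.induction_on with
  | C a => simp [Pi.algebraMap_def]
  | add p q hp hq => simpa using hp.add hq
  | mul_X p i hp => rw [map_mul, evalReal_X]; exact hp.mul (by fun_prop)

theorem pd_evalReal_X (j i : Fin n) : pd j (evalReal (X i)) = evalReal (pderiv j (X i)) := by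
  classical
  funext y
  rw [pd, evalReal_X, show (fun y : E n => ((y i : ℝ) : ℂ)) =
    ⇑(Complex.ofRealCLM.comp (EuclideanSpace.proj i : E n →L[ℝ] ℝ)) from rfl,
    ContinuousLinearMap.fderiv, pderiv_X]
  by_cases h : i = j
  · subst h; simp
  · simp [h]

theorem pd_evalReal (j : Fin n) (p : MvPolynomial (Fin n) ℂ) :
    pd j (evalReal p) = evalReal (pderiv j p) := by
  funext y
  induction p using MvPolynomial.induction_on with
  | C a => simp [pd, Pi.algebraMap_def]
  | add p q hp hq =>
    simp_all [pd, fderiv_add (differentiable_evalReal p y) (differentiable_evalReal q y)]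
  | mul_X p i hp =>
    have hX := congrFun (pd_evalReal_X j i) y
    simp only [pd] at hp hX ⊢
    rw [map_mul, fderiv_mul (differentiable_evalReal p y) (differentiable_evalReal _ y)]
    simp [hp, hX]

theorem evalReal_pderiv_congr (j : Fin n) {p q : MvPolynomial (Fin n) ℂ}
    (h : evalReal p = evalReal q) : evalReal (pderiv j p) = evalReal (pderiv j q) := by
  rw [← pd_evalReal, h, pd_evalReal]

theorem lap_evalReal (p : MvPolynomial (Fin n) ℂ) : lap (evalReal p) = evalReal (laplacian p) := by
  funext y
  simp [lap, laplacian_apply, pd_evalReal]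

theorem evalReal_sumSq (y : E n) : evalReal sumSq y = ((‖y‖ : ℝ) : ℂ) ^ 2 := by
  rw [← Complex.ofReal_pow, EuclideanSpace.norm_sq_eq]
  simp [sumSq, evalReal_X]

theorem evalReal_eulerOperator (p : MvPolynomial (Fin n) ℂ) (y : E n) :
    evalReal (eulerOperator p) y = fderiv ℝ (evalReal p) y y := by
  have hy : ∑ i, y i • EuclideanSpace.single i (1 : ℝ) = y := by
    simpa using (EuclideanSpace.basisFun (Fin n) ℝ).sum_repr y
  calc evalReal (eulerOperator p) y = ∑ i, ((y i : ℝ) : ℂ) * pd i (evalReal p) y := by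
        simp [eulerOperator, evalReal_X, pd_evalReal]
    _ = fderiv ℝ (evalReal p) y (∑ i, y i • EuclideanSpace.single i 1) := by
        simp [pd, Complex.real_smul]
    _ = fderiv ℝ (evalReal p) y y := by rw [hy]

end EvalReal

section Harmonic

variable {n k : ℕ} {p : MvPolynomial (Fin n) ℂ}

theorem evalReal_eulerOperator_of_homog
    (hp : ∀ (t : ℝ) (y : E n), evalReal p (t • y) = (t : ℂ) ^ k * evalReal p y) :
    evalReal (eulerOperator p) = evalReal ((k : MvPolynomial (Fin n) ℂ) * p) := by
  funext y
  rw [evalReal_eulerOperator, fderiv_apply_self_of_homog hp (differentiable_evalReal p)]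
  simp

theorem evalReal_laplacian_X_mul_sub_smul
    (hp : ∀ (t : ℝ) (y : E n), evalReal p (t • y) = (t : ℂ) ^ k * evalReal p y)
    (hlap : evalReal (laplacian p) = 0) (c : ℂ) (j : Fin n) :
    evalReal (laplacian (X j * p - c • (sumSq * pderiv j p))) =
      (2 * (1 - c * (2 * k + n - 2)) : ℂ) • evalReal (pderiv j p) := by
  have hΔD : evalReal (laplacian (pderiv j p)) = 0 := by
    rw [← pderiv_laplacian, evalReal_pderiv_congr j (hlap.trans (map_zero evalReal).symm),
      map_zero, map_zero]
  have hED : evalReal (eulerOperator (pderiv j p)) =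
      evalReal (((k : MvPolynomial (Fin n) ℂ) - 1) * pderiv j p) := by
    have := evalReal_pderiv_congr j (evalReal_eulerOperator_of_homog hp)
    rw [pderiv_eulerOperator, pderiv_mul, Derivation.map_natCast] at this
    simp only [map_add, map_mul, map_sub, zero_mul, zero_add, map_one] at this ⊢
    linear_combination this
  simp only [map_sub, map_smul, laplacian_X_mul, laplacian_sumSq_mul, map_add, map_mul, hlap, hΔD,
    hED, map_natCast, map_ofNat, map_one, Fintype.card_fin, mul_zero, add_zero]
  funext y
  simp only [Pi.sub_apply, Pi.mul_apply, Pi.ofNat_apply, Pi.add_apply, Pi.smul_apply,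
    Pi.natCast_apply, smul_eq_mul]
  ring

end Harmonic

theorem homog_succ_coord_mul_sub_norm_sq_mul_pd {n k : ℕ} {f : E n → ℂ}
    (hf : ∀ (t : ℝ) (y : E n), f (t • y) = (t : ℂ) ^ k * f y) (hd : Differentiable ℝ f)
    (c : ℂ) (j : Fin n) (t : ℝ) (y : E n) :
    (((t • y) j : ℝ) : ℂ) * f (t • y) - c * ((‖t • y‖ : ℝ) : ℂ) ^ 2 * pd j f (t • y) =
      (t : ℂ) ^ (k + 1) * (((y j : ℝ) : ℂ) * f y - c * ((‖y‖ : ℝ) : ℂ) ^ 2 * pd j f y) := by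
  have hD : (t : ℂ) * pd j f (t • y) = (t : ℂ) ^ k * pd j f y := by
    simpa [pd, Complex.real_smul] using
      congrArg (· (EuclideanSpace.single j 1)) (smul_fderiv_smul_of_homog hf hd t y)
  have hnorm : ((‖t • y‖ : ℝ) : ℂ) ^ 2 = (t : ℂ) ^ 2 * ((‖y‖ : ℝ) : ℂ) ^ 2 := by
    rw [norm_smul, Real.norm_eq_abs, Complex.ofReal_mul, mul_pow, ← Complex.ofReal_pow, sq_abs,
      Complex.ofReal_pow]
  rw [hf, hnorm, PiLp.smul_apply, smul_eq_mul, Complex.ofReal_mul]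
  linear_combination (-c * (t : ℂ) * ((‖y‖ : ℝ) : ℂ) ^ 2) * hD

theorem ckn_mul_eq_one {k n : ℕ} (hn : 1 ≤ n) (hkn : ¬(k = 0 ∧ n = 2)) :
    ckn k n * (2 * k + n - 2) = 1 := by
  have hne : (2 * k + n - 2 : ℂ) ≠ 0 := by
    rw [sub_ne_zero]
    exact_mod_cast (by omega : 2 * k + n ≠ 2)
  rw [ckn, if_neg hkn, one_div, inv_mul_cancel₀ hne]

/-- For `h` a harmonic polynomial homogeneous of degree `k` on `ℝⁿ` (`n ≥ 1`), the
function `y ↦ yⱼ h(y) - c_{k,n} ‖y‖² ∂ⱼh(y)` is a harmonic polynomial homogeneous of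
degree `k+1`. -/
theorem stmt5 (n k : ℕ) (hn : 1 ≤ n) (h : E n → ℂ) (hh : IsHarmonicHomog k h)
    (j : Fin n) :
    IsHarmonicHomog (k + 1)
      (fun y : E n => ((y j : ℝ) : ℂ) * h y - ckn k n * ((‖y‖ : ℝ) : ℂ) ^ 2 * pd j h y) := by
  obtain ⟨⟨p, hp⟩, hhom, hlap⟩ := hh
  obtain rfl : h = evalReal p := funext fun y => by rw [hp, evalReal_apply]
  set q := X j * p - ckn k n • (sumSq * pderiv j p)
  have hq : (fun y : E n => ((y j : ℝ) : ℂ) * evalReal p y -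
      ckn k n * ((‖y‖ : ℝ) : ℂ) ^ 2 * pd j (evalReal p) y) = evalReal q := by
    funext y
    simp [q, evalReal_sumSq, evalReal_X, pd_evalReal, mul_assoc]
  refine ⟨⟨q, fun y => by rw [hq, evalReal_apply]⟩,
    homog_succ_coord_mul_sub_norm_sq_mul_pd hhom (differentiable_evalReal p) _ j, fun y => ?_⟩
  rw [hq, lap_evalReal, evalReal_laplacian_X_mul_sub_smul hhom
    (by rw [← lap_evalReal]; exact funext hlap)]
  by_cases hkn : k = 0 ∧ n = 2
  · obtain ⟨rfl, rfl⟩ := hkn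
    simp [← pd_evalReal, pd, fderiv_eq_zero_of_homog_zero hhom]
  · simp [ckn_mul_eq_one hn hkn]

end
end

section
/- Let n ≥ 1 and k ≥ 0 be integers with (k,n) ≠ (1,1), let h : ℝⁿ → ℂ be a nonzero harmonic polynomial homogeneous of degree k, and set c_{k,n} := 1/(2k+n−2) if (k,n) ≠ (0,2) and c_{0,2} := 0. Then there exists j ∈ {1,…,n} such that the function y ↦ y_j h(y) − c_{k,n} ‖y‖² (∂h/∂y_j)(y) is not identically zero. -/
noncomputable section

/-!
If `yⱼ h = c ‖y‖² ∂ⱼh` for every `j`, multiply by `yⱼ` and sum: Euler's identity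
`∑ yⱼ ∂ⱼh = k h` turns this into `‖y‖² h = c k ‖y‖² h`. As `h ≠ 0` is homogeneous it is nonzero
at some `y ≠ 0`, so `c k = 1`; but `c_{k,n} k = 1` forces `k ≠ 0` and `k = 2k + n - 2`,
which for `n ≥ 1` leaves only the excluded `(k,n) = (1,1)`.
-/

open Finset

lemma differentiable_eval_mvPolynomial {n : ℕ} (p : MvPolynomial (Fin n) ℂ) :
    Differentiable ℝ (fun y : E n => MvPolynomial.eval (fun j => ((y j : ℝ) : ℂ)) p) := by
  induction p using MvPolynomial.induction_on with
  | C a => simp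
  | add p q hp hq => simp only [map_add]; exact hp.add hq
  | mul_X p i hp =>
      simp only [MvPolynomial.eval_mul, MvPolynomial.eval_X]
      exact hp.mul (Complex.ofRealCLM.differentiable.comp
        (EuclideanSpace.proj i : E n →L[ℝ] ℝ).differentiable)

section Homogeneous

variable {V : Type*} [NormedAddCommGroup V] [NormedSpace ℝ V] {k : ℕ} {h : V → ℂ}

/-- Euler's identity: differentiate `t ↦ h (t • y) = t ^ k * h y` at `t = 1`. -/
lemma fderiv_apply_self_of_homogeneous (hdiff : Differentiable ℝ h)
    (hom : ∀ (t : ℝ) (y : V), h (t • y) = (t : ℂ) ^ k * h y) (y : V) :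
    fderiv ℝ h y y = k * h y := by
  have hline : HasDerivAt (fun t : ℝ => t • y) y 1 := by
    simpa using (hasDerivAt_id (1 : ℝ)).smul_const y
  have hcomp : HasDerivAt (fun t : ℝ => h (t • y)) (fderiv ℝ h y y) 1 :=
    (by simpa using (hdiff y).hasFDerivAt : HasFDerivAt h (fderiv ℝ h y) ((1 : ℝ) • y))
      |>.comp_hasDerivAt 1 hline
  have hpow : HasDerivAt (fun t : ℝ => (t : ℂ) ^ k * h y) (k * h y) 1 := by
    simpa using ((hasDerivAt_pow k ((1 : ℝ) : ℂ)).comp_ofReal).mul_const (h y)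
  simp only [hom] at hcomp
  exact hcomp.unique hpow

lemma eq_zero_of_homogeneous_of_eq_zero_off_zero [Nontrivial V]
    (hom : ∀ (t : ℝ) (y : V), h (t • y) = (t : ℂ) ^ k * h y) (hoff : ∀ y, y ≠ 0 → h y = 0) :
    h = 0 := by
  obtain ⟨y₀, hy₀⟩ := exists_ne (0 : V)
  funext y
  by_cases hy : y = 0
  · simpa [hy, hoff y₀ hy₀] using hom 0 y₀
  · exact hoff y hy

end Homogeneous

lemma sum_coord_mul_pd {n : ℕ} (f : E n → ℂ) (y : E n) :
    ∑ j, ((y j : ℝ) : ℂ) * pd j f y = fderiv ℝ f y y := by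
  have hy : ∑ j, y j • EuclideanSpace.single j (1 : ℝ) = y := by
    simpa using (EuclideanSpace.basisFun (Fin n) ℝ).sum_repr y
  calc ∑ j, ((y j : ℝ) : ℂ) * pd j f y
      = fderiv ℝ f y (∑ j, y j • EuclideanSpace.single j (1 : ℝ)) := by
        simp [pd, Complex.real_smul]
    _ = fderiv ℝ f y y := by rw [hy]

lemma ofReal_norm_sq_eq_sum {n : ℕ} (y : E n) :
    ((‖y‖ : ℝ) : ℂ) ^ 2 = ∑ j, ((y j : ℝ) : ℂ) ^ 2 := by
  simp_rw [← Complex.ofReal_pow, EuclideanSpace.norm_sq_eq, Real.norm_eq_abs, sq_abs,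
    Complex.ofReal_sum]

lemma one_sub_mul_norm_sq_mul_eq_zero {n k : ℕ} {h : E n → ℂ} {c : ℂ}
    (hdiff : Differentiable ℝ h) (hom : ∀ (t : ℝ) (y : E n), h (t • y) = (t : ℂ) ^ k * h y)
    {y : E n} (hy : ∀ j, ((y j : ℝ) : ℂ) * h y = c * ((‖y‖ : ℝ) : ℂ) ^ 2 * pd j h y) :
    (1 - c * k) * ((‖y‖ : ℝ) : ℂ) ^ 2 * h y = 0 := by
  have hsum : ((‖y‖ : ℝ) : ℂ) ^ 2 * h y = c * ((‖y‖ : ℝ) : ℂ) ^ 2 * (k * h y) :=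
    calc ((‖y‖ : ℝ) : ℂ) ^ 2 * h y
        = ∑ j, ((y j : ℝ) : ℂ) * (((y j : ℝ) : ℂ) * h y) := by
          rw [ofReal_norm_sq_eq_sum, sum_mul]
          exact sum_congr rfl fun j _ => by ring
      _ = c * ((‖y‖ : ℝ) : ℂ) ^ 2 * ∑ j, ((y j : ℝ) : ℂ) * pd j h y := by
          rw [mul_sum]
          exact sum_congr rfl fun j _ => by rw [hy j]; ring
      _ = c * ((‖y‖ : ℝ) : ℂ) ^ 2 * (k * h y) := by
          rw [sum_coord_mul_pd, fderiv_apply_self_of_homogeneous hdiff hom]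
  linear_combination hsum

lemma ckn_mul_ne_one {k n : ℕ} (hn : 1 ≤ n) (hkn : ¬(k = 1 ∧ n = 1)) : ckn k n * k ≠ 1 := by
  intro hck
  rcases Nat.eq_zero_or_pos k with rfl | hk
  · simp at hck
  rw [ckn, if_neg (fun hx => hk.ne' hx.1)] at hck
  have hd : 2 * (k : ℂ) + n - 2 ≠ 0 := by
    rintro hd
    simp [hd] at hck
  have hkn_sum : ((k + n : ℕ) : ℂ) = 2 := by
    field_simp at hck
    push_cast
    linear_combination -hck
  have : k + n = 2 := by exact_mod_cast hkn_sum
  exact hkn (by omega)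

/-- For `h` a nonzero harmonic polynomial homogeneous of degree `k` on `ℝⁿ` (`n ≥ 1`,
`(k,n) ≠ (1,1)`), there is some `j` for which
`y ↦ yⱼ h(y) - c_{k,n} ‖y‖² ∂ⱼh(y)` is not identically zero. -/
theorem stmt6 (n k : ℕ) (hn : 1 ≤ n) (hkn : ¬(k = 1 ∧ n = 1)) (h : E n → ℂ)
    (hh : IsHarmonicHomog k h) (hne : h ≠ 0) :
    ∃ j : Fin n,
      (fun y : E n => ((y j : ℝ) : ℂ) * h y - ckn k n * ((‖y‖ : ℝ) : ℂ) ^ 2 * pd j h y) ≠ 0 := by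
  obtain ⟨⟨p, hp⟩, hom, -⟩ := hh
  have hdiff : Differentiable ℝ h := (funext hp : h = _) ▸ differentiable_eval_mvPolynomial p
  have : Nonempty (Fin n) := ⟨⟨0, hn⟩⟩
  by_contra! hc
  refine hne (eq_zero_of_homogeneous_of_eq_zero_off_zero hom fun y hy => ?_)
  have hrel := one_sub_mul_norm_sq_mul_eq_zero (c := ckn k n) hdiff hom
    fun j => sub_eq_zero.mp (congrFun (hc j) y)
  have hck : 1 - ckn k n * k ≠ 0 := sub_ne_zero.mpr (ckn_mul_ne_one hn hkn).symm
  have hnorm : ((‖y‖ : ℝ) : ℂ) ^ 2 ≠ 0 := by simpa using hy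
  simpa [hck, hnorm] using hrel

end
end

section
/- Let n ≥ 1, k ≥ 0, l ≥ 0 be integers, m ∈ ℤ, s ∈ ℂ, and set λ := l(2l+2k+n−2), a := (m+4l+2k+n)/4, and b := 2l+k+n/2. Then the function ψ(ρ) := e^{−isρ²} ρ^{2l} ₁F₁(a, b, 2isρ²) satisfies ρ²ψ''(ρ) + (n−1+2k)ρψ'(ρ) + (4s²ρ⁴ − 2ismρ² − 2λ)ψ(ρ) = 0 for all ρ > 0. -/
/-- Confluent hypergeometric function of the first kind
`₁F₁(a,b,z) = ∑ⱼ (a)ⱼ/(b)ⱼ · zʲ/j!`. -/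
noncomputable def oneF1 (a b z : ℂ) : ℂ :=
  ∑' j : ℕ, ((ascPochhammer ℂ j).eval a / (ascPochhammer ℂ j).eval b) * z ^ j / (j.factorial : ℂ)

/-- `b` is not a nonpositive integer. -/
def NotNonposInt (b : ℂ) : Prop := ∀ m : ℤ, m ≤ 0 → b ≠ (m : ℂ)

/-!
Put `w = 2isρ²`. Derivatives of `e^{-isρ²} ρ^j G(w)` are again combinations of such functions
(with `G`, `G'`, `G''`) whose coefficients, after multiplying by `ρ` resp. `ρ²`, are polynomials
in `j` and `w`. For `G = M = ₁F₁(a, b, ·)` the left-hand side of the equation becomes `4w` times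
Kummer's equation `w M'' + (b - w) M' - a M = 0`, which holds termwise by the coefficient
recurrence `(b + n)(n + 1) c_{n+1} = (a + n) c_n`. That `M` is entire comes from Mathlib's
regularized hypergeometric function, as `₁F₁(a, b, ·) = Γ(b) · ₁F̃₁(a; b; ·)`; then so is
`M' = (a/b) ₁F₁(a+1, b+1, ·)`.
-/

open FormalMultilinearSeries Complex
open scoped Nat

namespace FormalMultilinearSeries

variable {𝕜 : Type*} [NontriviallyNormedField 𝕜] [CompleteSpace 𝕜] {c : ℕ → 𝕜} {z : 𝕜}

theorem hasSum_ofScalarsSum (hz : ‖z‖ₑ < (ofScalars 𝕜 c).radius) :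
    HasSum (fun n => c n * z ^ n) (ofScalarsSum c z) := by
  simpa [ofScalarsSum, ofScalars_apply_eq, mul_comm] using
    (ofScalars 𝕜 c).hasSum (x := z) (by simpa using hz)

theorem differentiableAt_ofScalarsSum (hz : ‖z‖ₑ < (ofScalars 𝕜 c).radius) :
    DifferentiableAt 𝕜 (ofScalarsSum c) z :=
  ((ofScalars 𝕜 c).hasFDerivAt_sum hz).differentiableAt

theorem hasSum_deriv_ofScalarsSum (hz : ‖z‖ₑ < (ofScalars 𝕜 c).radius) :
    HasSum (fun n => (n + 1) * c (n + 1) * z ^ n) (deriv (ofScalarsSum c) z) := by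
  set p := ofScalars 𝕜 c
  have hsum := (p.derivSeries.hasSum (x := z)
    (by simpa using hz.trans_le p.radius_le_radius_derivSeries)).mapL
    (ContinuousLinearMap.apply 𝕜 𝕜 1)
  have hterm : ∀ n, (ContinuousLinearMap.apply 𝕜 𝕜 1) (p.derivSeries n fun _ => z)
      = (n + 1) * c (n + 1) * z ^ n := fun n => by
    simp [p, coeff_ofScalars, mul_comm]
  simp only [hterm] at hsum
  rwa [ofScalarsSum, (p.hasFDerivAt_sum hz).hasDerivAt.deriv]

theorem hasSum_mul_deriv_ofScalarsSum (hz : ‖z‖ₑ < (ofScalars 𝕜 c).radius) :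
    HasSum (fun n => n * c n * z ^ n) (z * deriv (ofScalarsSum c) z) := by
  have h := (hasSum_deriv_ofScalarsSum hz).mul_left z
  refine (hasSum_nat_add_iff' 1).mp ?_
  simpa [pow_succ, mul_comm, mul_left_comm, mul_assoc] using h

end FormalMultilinearSeries

theorem NotNonposInt.ne_neg_natCast {b : ℂ} (hb : NotNonposInt b) (k : ℕ) : b ≠ -k := by
  simpa using hb (-k) (by omega)

theorem notNonposInt_of_re_pos {b : ℂ} (hb : 0 < b.re) : NotNonposInt b := fun m hm h => by
  have : (m : ℝ) ≤ 0 := by exact_mod_cast hm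
  rw [h] at hb
  simp only [intCast_re] at hb
  linarith

theorem NotNonposInt.add_one {b : ℂ} (hb : NotNonposInt b) : NotNonposInt (b + 1) :=
  fun m hm h => hb (m - 1) (by omega) (by push_cast; linear_combination h)

noncomputable def oneF1Coeff (a b : ℂ) (n : ℕ) : ℂ :=
  (ascPochhammer ℂ n).eval a / ((ascPochhammer ℂ n).eval b * n !)

theorem oneF1_eq_ofScalarsSum (a b : ℂ) : oneF1 a b = ofScalarsSum (oneF1Coeff a b) := by
  funext z
  rw [ofScalars_sum_eq]
  refine tsum_congr fun n => ?_
  rw [oneF1Coeff, smul_eq_mul]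
  ring

theorem oneF1Coeff_eq_Gamma_smul {a b : ℂ} (hb : NotNonposInt b) :
    oneF1Coeff a b = Gamma b • regularizedHGFunCoeff {a} {b} := by
  funext n
  have hΓ : Gamma (b + n) = Gamma b * (ascPochhammer ℂ n).eval b := by
    rw [← Gamma_add_nat_div_Gamma_eq b hb.ne_neg_natCast,
      mul_div_cancel₀ _ (Gamma_ne_zero hb.ne_neg_natCast)]
  simp only [oneF1Coeff, regularizedHGFunCoeff, Pi.smul_apply, smul_eq_mul,
    Multiset.map_singleton, Multiset.prod_singleton, hΓ]
  field_simp [Gamma_ne_zero hb.ne_neg_natCast]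

theorem radius_ofScalars_oneF1Coeff (a : ℂ) {b : ℂ} (hb : NotNonposInt b) :
    (ofScalars ℂ (oneF1Coeff a b)).radius = ⊤ := by
  rw [oneF1Coeff_eq_Gamma_smul hb, ofScalars_smul,
    radius_smul_eq _ (Gamma_ne_zero hb.ne_neg_natCast)]
  exact radius_regularizedHGFunSeries_eq_top (by simp)

theorem succ_mul_oneF1Coeff_succ (a b : ℂ) (n : ℕ) :
    (n + 1) * oneF1Coeff a b (n + 1) = a / b * oneF1Coeff (a + 1) (b + 1) n := by
  simp only [oneF1Coeff, ascPochhammer_succ_left, Polynomial.eval_mul, Polynomial.eval_comp,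
    Polynomial.eval_X, Polynomial.eval_add, Polynomial.eval_one, Nat.factorial_succ]
  push_cast
  field_simp

theorem oneF1Coeff_recurrence (a : ℂ) {b : ℂ} (hb : NotNonposInt b) (n : ℕ) :
    (b + n) * ((n + 1) * oneF1Coeff a b (n + 1)) = (a + n) * oneF1Coeff a b n := by
  have hpoch : (ascPochhammer ℂ n).eval b ≠ 0 := fun h => by
    obtain ⟨k, -, hk⟩ := (ascPochhammer_eval_eq_zero_iff n b).mp h
    exact hb.ne_neg_natCast k (by linear_combination hk)
  have hbn : b + n ≠ 0 := fun h => hb.ne_neg_natCast n (by linear_combination h)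
  simp only [oneF1Coeff, ascPochhammer_succ_eval, Nat.factorial_succ]
  push_cast
  field_simp

section oneF1

variable (a : ℂ) {b : ℂ} (hb : NotNonposInt b) (z : ℂ)
include hb

theorem hasSum_oneF1 : HasSum (fun n => oneF1Coeff a b n * z ^ n) (oneF1 a b z) := by
  rw [oneF1_eq_ofScalarsSum]
  exact hasSum_ofScalarsSum (by simp [radius_ofScalars_oneF1Coeff a hb])

theorem hasSum_mul_deriv_oneF1 :
    HasSum (fun n => n * oneF1Coeff a b n * z ^ n) (z * deriv (oneF1 a b) z) := by
  rw [oneF1_eq_ofScalarsSum]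
  exact hasSum_mul_deriv_ofScalarsSum (by simp [radius_ofScalars_oneF1Coeff a hb])

theorem differentiable_oneF1 : Differentiable ℂ (oneF1 a b) := fun z => by
  rw [oneF1_eq_ofScalarsSum]
  exact differentiableAt_ofScalarsSum (by simp [radius_ofScalars_oneF1Coeff a hb])

theorem deriv_oneF1 : deriv (oneF1 a b) z = a / b * oneF1 (a + 1) (b + 1) z := by
  have h := hasSum_deriv_ofScalarsSum (c := oneF1Coeff a b) (z := z)
    (by simp [radius_ofScalars_oneF1Coeff a hb])
  simp only [succ_mul_oneF1Coeff_succ, mul_assoc] at h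
  rw [oneF1_eq_ofScalarsSum, h.unique ((hasSum_oneF1 (a + 1) hb.add_one z).mul_left _)]

theorem differentiable_deriv_oneF1 : Differentiable ℂ (deriv (oneF1 a b)) := by
  rw [funext (deriv_oneF1 a hb)]
  exact (differentiable_oneF1 (a + 1) hb.add_one).const_mul _

theorem oneF1_kummer_ode :
    z * deriv (deriv (oneF1 a b)) z + (b - z) * deriv (oneF1 a b) z - a * oneF1 a b z = 0 := by
  have hterm : ∀ n : ℕ, n * oneF1Coeff a b n * z ^ n + a * (oneF1Coeff a b n * z ^ n)
      = a / b * (n * oneF1Coeff (a + 1) (b + 1) n * z ^ n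
        + b * (oneF1Coeff (a + 1) (b + 1) n * z ^ n)) := fun n => by
    linear_combination -z ^ n * oneF1Coeff_recurrence a hb n
      + (n + b) * z ^ n * succ_mul_oneF1Coeff_succ a b n
  have hEuler := ((hasSum_mul_deriv_oneF1 (a + 1) hb.add_one z).add
    ((hasSum_oneF1 (a + 1) hb.add_one z).mul_left b)).mul_left (a / b)
  have hsum := hEuler.unique
    (((hasSum_mul_deriv_oneF1 a hb z).add ((hasSum_oneF1 a hb z).mul_left a)).congr_fun
      fun n => (hterm n).symm)
  rw [deriv_oneF1 a hb] at hsum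
  rw [funext (deriv_oneF1 a hb), deriv_const_mul _ (differentiable_oneF1 (a + 1) hb.add_one z)]
  linear_combination hsum

end oneF1

noncomputable def chirpProfile (s : ℂ) (j : ℕ) (G : ℂ → ℂ) (ρ : ℝ) : ℂ :=
  exp (-I * s * (ρ : ℂ) ^ 2) * (ρ : ℂ) ^ j * G (2 * I * s * (ρ : ℂ) ^ 2)

theorem hasDerivAt_chirpProfile {s : ℂ} {j : ℕ} {G G' : ℂ → ℂ} {ρ : ℝ} (hρ : ρ ≠ 0)
    (hG : HasDerivAt G (G' (2 * I * s * (ρ : ℂ) ^ 2)) (2 * I * s * (ρ : ℂ) ^ 2)) :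
    HasDerivAt (chirpProfile s j G)
      ((j / ρ - 2 * I * s * ρ) * chirpProfile s j G ρ + 4 * I * s * ρ * chirpProfile s j G' ρ)
      ρ := by
  have hsq := hasDerivAt_pow 2 (ρ : ℂ)
  have hE := (hsq.const_mul (-I * s)).cexp
  have hGw := hG.comp (ρ : ℂ) (hsq.const_mul (2 * I * s))
  have hpow : (j : ℂ) * (ρ : ℂ) ^ (j - 1) = j / ρ * (ρ : ℂ) ^ j := by
    rcases j with _ | j
    · simp
    · have : (ρ : ℂ) ≠ 0 := by exact_mod_cast hρ
      rw [Nat.add_sub_cancel, pow_succ]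
      field_simp
  refine ((hE.mul (hasDerivAt_pow j (ρ : ℂ))).mul hGw).comp_ofReal.congr_deriv ?_
  simp only [chirpProfile, Function.comp_apply, Pi.mul_apply, hpow]
  push_cast
  ring

theorem mul_deriv_chirpProfile {s : ℂ} {j : ℕ} {G : ℂ → ℂ} {ρ : ℝ} (hρ : ρ ≠ 0)
    (hG : Differentiable ℂ G) :
    (ρ : ℂ) * deriv (chirpProfile s j G) ρ
      = (j - 2 * I * s * ρ ^ 2) * chirpProfile s j G ρ
        + 2 * (2 * I * s * ρ ^ 2) * chirpProfile s j (deriv G) ρ := by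
  have hρc : (ρ : ℂ) ≠ 0 := by exact_mod_cast hρ
  rw [(hasDerivAt_chirpProfile hρ (hG _).hasDerivAt).deriv]
  field_simp
  ring

theorem sq_mul_deriv_deriv_chirpProfile {s : ℂ} {j : ℕ} {G : ℂ → ℂ} {ρ : ℝ} (hρ : ρ ≠ 0)
    (hG : Differentiable ℂ G) (hG' : Differentiable ℂ (deriv G)) :
    (ρ : ℂ) ^ 2 * deriv (deriv (chirpProfile s j G)) ρ
      = ((j - 2 * I * s * ρ ^ 2) ^ 2 - j - 2 * I * s * ρ ^ 2) * chirpProfile s j G ρ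
        + 2 * (2 * I * s * ρ ^ 2) * (2 * j + 1 - 2 * (2 * I * s * ρ ^ 2))
          * chirpProfile s j (deriv G) ρ
        + 4 * (2 * I * s * ρ ^ 2) ^ 2 * chirpProfile s j (deriv (deriv G)) ρ := by
  have hρc : (ρ : ℂ) ≠ 0 := by exact_mod_cast hρ
  set ψ₁ : ℝ → ℂ := fun y => ((j : ℂ) / y - 2 * I * s * y) * chirpProfile s j G y
    + 4 * I * s * y * chirpProfile s j (deriv G) y
  have hψ₁ : deriv (chirpProfile s j G) =ᶠ[nhds ρ] ψ₁ := by
    filter_upwards [eventually_ne_nhds hρ] with y hy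
    exact (hasDerivAt_chirpProfile hy (hG _).hasDerivAt).deriv
  have hcoeff₁ : HasDerivAt (fun y : ℝ => (j : ℂ) / y - 2 * I * s * y)
      (-(j : ℂ) / (ρ : ℂ) ^ 2 - 2 * I * s) ρ := by
    convert (((hasDerivAt_inv hρc).const_mul (j : ℂ)).sub
      ((hasDerivAt_id (ρ : ℂ)).const_mul (2 * I * s))).comp_ofReal using 1 <;>
    simp [div_eq_mul_inv]
  have hcoeff₂ : HasDerivAt (fun y : ℝ => 4 * I * s * y) (4 * I * s) ρ := by
    simpa using ((hasDerivAt_id (ρ : ℂ)).const_mul (4 * I * s)).comp_ofReal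
  have hψ₁' : HasDerivAt ψ₁ _ ρ :=
    (hcoeff₁.mul (hasDerivAt_chirpProfile hρ (hG _).hasDerivAt)).add
      (hcoeff₂.mul (hasDerivAt_chirpProfile hρ (hG' _).hasDerivAt))
  rw [hψ₁.deriv_eq, hψ₁'.deriv]
  field_simp
  ring

theorem chirpProfile_oneF1_ode (a : ℂ) {b : ℂ} (hb : NotNonposInt b) (s : ℂ) (j : ℕ) {ρ : ℝ}
    (hρ : ρ ≠ 0) :
    (ρ : ℂ) ^ 2 * deriv (deriv (chirpProfile s j (oneF1 a b))) ρ
      + (2 * b - 2 * j - 1) * ρ * deriv (chirpProfile s j (oneF1 a b)) ρ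
      + (4 * s ^ 2 * ρ ^ 4 + 2 * (b - 2 * a) * (2 * I * s * ρ ^ 2) - j * (2 * b - j - 2))
        * chirpProfile s j (oneF1 a b) ρ = 0 := by
  have hK : (2 * I * s * ρ ^ 2) * chirpProfile s j (deriv (deriv (oneF1 a b))) ρ
      + (b - 2 * I * s * ρ ^ 2) * chirpProfile s j (deriv (oneF1 a b)) ρ
      - a * chirpProfile s j (oneF1 a b) ρ = 0 := by
    simp only [chirpProfile]
    linear_combination
      exp (-I * s * (ρ : ℂ) ^ 2) * (ρ : ℂ) ^ j * oneF1_kummer_ode a hb (2 * I * s * ρ ^ 2)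
  linear_combination
    sq_mul_deriv_deriv_chirpProfile (s := s) (j := j) hρ (differentiable_oneF1 a hb)
      (differentiable_deriv_oneF1 a hb)
    + (2 * b - 2 * j - 1)
      * mul_deriv_chirpProfile (s := s) (j := j) hρ (differentiable_oneF1 a hb)
    + 4 * (2 * I * s * ρ ^ 2) * hK
    + 4 * s ^ 2 * ρ ^ 4 * chirpProfile s j (oneF1 a b) ρ * I_sq

/-- With `λ = l(2l+2k+n-2)`, `a = (m+4l+2k+n)/4`, `b = 2l+k+n/2`, the function
`ψ(ρ) = e^{-isρ²} ρ^{2l} ₁F₁(a,b,2isρ²)` satisfies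
`ρ²ψ'' + (n-1+2k)ρψ' + (4s²ρ⁴ - 2ismρ² - 2λ)ψ = 0` for `ρ > 0`. -/
theorem stmt11 (n k l : ℕ) (hn : 1 ≤ n) (m : ℤ) (s : ℂ)
    (ψ : ℝ → ℂ)
    (hψ : ∀ ρ : ℝ, ψ ρ =
      Complex.exp (-Complex.I * s * ((ρ : ℝ) : ℂ) ^ 2) * ((ρ : ℝ) : ℂ) ^ (2 * l) *
        oneF1 (((m : ℂ) + 4 * (l : ℂ) + 2 * (k : ℂ) + (n : ℂ)) / 4)
          (2 * (l : ℂ) + (k : ℂ) + (n : ℂ) / 2)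
          (2 * Complex.I * s * ((ρ : ℝ) : ℂ) ^ 2)) :
    ∀ ρ : ℝ, 0 < ρ →
      ((ρ : ℝ) : ℂ) ^ 2 * deriv (deriv ψ) ρ
        + ((n : ℂ) - 1 + 2 * (k : ℂ)) * (ρ : ℂ) * deriv ψ ρ
        + (4 * s ^ 2 * ((ρ : ℝ) : ℂ) ^ 4 - 2 * Complex.I * s * (m : ℂ) * ((ρ : ℝ) : ℂ) ^ 2
            - 2 * ((l : ℂ) * (2 * (l : ℂ) + 2 * (k : ℂ) + (n : ℂ) - 2))) * ψ ρ = 0 := by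
  intro ρ hρ
  have hb : NotNonposInt (2 * (l : ℂ) + (k : ℂ) + (n : ℂ) / 2) := notNonposInt_of_re_pos <| by
    have : (1 : ℝ) ≤ n := by exact_mod_cast hn
    norm_num
    positivity
  have h := chirpProfile_oneF1_ode (((m : ℂ) + 4 * (l : ℂ) + 2 * (k : ℂ) + (n : ℂ)) / 4) hb s
    (2 * l) hρ.ne'
  obtain rfl : ψ = chirpProfile s (2 * l) _ := funext hψ
  push_cast at h
  linear_combination h
end

section
/- Let n ≥ 1 be an integer, s ∈ ℂ, and let f : ℝ × ℝⁿ → ℂ be smooth. Define F : (−π/2, π/2) × ℝⁿ → ℂ by F(θ,y) := (cos θ)^{−n/2} e^{−s‖y‖² tan θ} f(tan θ, (sec θ)·y). Then for every j ∈ {1,…,n} and every (θ,y) ∈ (−π/2, π/2) × ℝⁿ, (cos θ)^{−n/2} e^{−s‖y‖² tan θ} (∂f/∂x_j)(tan θ, (sec θ)·y) = 2s y_j (sin θ) F(θ,y) + (cos θ)(∂F/∂y_j)(θ,y), where ∂f/∂x_j denotes the partial derivative of f in its j-th spatial variable. -/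
noncomputable section

theorem aux (n : ℕ) (s : ℂ)
    (f : ℝ × E n → ℂ) (hf : ContDiff ℝ (⊤ : ℕ∞) f)
    (j : Fin n) (θ : ℝ) (hc : 0 < Real.cos θ) (y : E n) :
    pd j (fun y' : E n =>
      ((Real.cos θ ^ (-(n : ℝ) / 2) : ℝ) : ℂ) *
        Complex.exp (-s * ((‖y'‖ : ℝ) : ℂ) ^ 2 * ((Real.tan θ : ℝ) : ℂ)) *
        f (Real.tan θ, (Real.cos θ)⁻¹ • y')) y
      = ((Real.cos θ ^ (-(n : ℝ) / 2) : ℝ) : ℂ) *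
        (Complex.exp (-s * ((‖y‖ : ℝ) : ℂ) ^ 2 * ((Real.tan θ : ℝ) : ℂ)) *
          ((-s * Real.tan θ) * (2 * (y j)) * f (Real.tan θ, (Real.cos θ)⁻¹ • y)
           + (Real.cos θ)⁻¹ *
             fderiv ℝ f (Real.tan θ, (Real.cos θ)⁻¹ • y) (0, EuclideanSpace.single j 1))) := by
  set t := Real.tan θ with ht
  set r := (Real.cos θ)⁻¹ with hr
  set c : ℂ := ((Real.cos θ ^ (-(n : ℝ) / 2) : ℝ) : ℂ) with hcdef
  set p : ℝ × E n := (t, r • y) with hp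
  -- exponential factor
  have h1 : HasFDerivAt (fun y' : E n => ((‖y'‖ ^ 2 : ℝ) : ℂ))
      (Complex.ofRealCLM.comp (2 • ((innerSL ℝ y).comp (ContinuousLinearMap.id ℝ (E n))))) y :=
    Complex.ofRealCLM.hasFDerivAt.comp y (hasFDerivAt_id y).norm_sq
  have h2 : HasFDerivAt (fun y' : E n => -s * ((‖y'‖ : ℝ) : ℂ) ^ 2 * (t : ℂ))
      ((-s * t) • (Complex.ofRealCLM.comp (2 • ((innerSL ℝ y).comp (ContinuousLinearMap.id ℝ (E n)))))) y := by
    have heq : (fun y' : E n => -s * ((‖y'‖ : ℝ) : ℂ) ^ 2 * (t : ℂ))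
        = fun y' : E n => (-s * t) • ((‖y'‖ ^ 2 : ℝ) : ℂ) := by
      funext y'; push_cast; simp [smul_eq_mul]; ring
    rw [heq]
    exact h1.const_smul (-s * (t:ℂ))
  have h3 := h2.cexp
  -- the f part
  have hA : HasFDerivAt (fun y' : E n => (t, r • y'))
      (((0 : E n →L[ℝ] ℝ)).prod (r • ContinuousLinearMap.id ℝ (E n))) y := by
    exact HasFDerivAt.prodMk (hasFDerivAt_const t y) ((hasFDerivAt_id y).const_smul r)
  have hfd : HasFDerivAt f (fderiv ℝ f p) p :=
    (hf.differentiable (by simp)).differentiableAt.hasFDerivAt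
  have h4 : HasFDerivAt (fun y' : E n => f (t, r • y'))
      ((fderiv ℝ f p).comp (((0 : E n →L[ℝ] ℝ)).prod (r • ContinuousLinearMap.id ℝ (E n)))) y :=
    hfd.comp y hA
  have h5 : HasFDerivAt (fun y' : E n => c * (Complex.exp (-s * ((‖y'‖ : ℝ) : ℂ) ^ 2 * (t:ℂ)) * f (t, r • y'))) _ y :=
    (h3.mul h4).const_mul c
  have h6 : (fun y' : E n => c * (Complex.exp (-s * ((‖y'‖ : ℝ) : ℂ) ^ 2 * (t:ℂ)) * f (t, r • y')))
      = fun y' : E n => c * Complex.exp (-s * ((‖y'‖ : ℝ) : ℂ) ^ 2 * (t:ℂ)) * f (t, r • y') := by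
    funext y'; ring
  rw [h6] at h5
  rw [pd, h5.fderiv]
  simp only [ContinuousLinearMap.smul_apply, ContinuousLinearMap.add_apply,
    ContinuousLinearMap.comp_apply, ContinuousLinearMap.prod_apply,
    ContinuousLinearMap.coe_smul', ContinuousLinearMap.zero_apply,
    ContinuousLinearMap.id_apply, Pi.smul_apply, Complex.ofRealCLM_apply,
    smul_eq_mul, two_smul, ContinuousLinearMap.add_apply]
  have hinner : (innerSL ℝ y) (EuclideanSpace.single j 1) = y j := by
    simp [EuclideanSpace.inner_single_right]
  have hsm : (fderiv ℝ f p) ((0:ℝ), r • EuclideanSpace.single j 1)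
      = r • (fderiv ℝ f p) ((0:ℝ), EuclideanSpace.single j 1) := by
    rw [← (fderiv ℝ f p).map_smul]
    congr 1
    simp [Prod.smul_mk]
  rw [hsm, hinner]
  rw [Complex.real_smul, ← hp]
  push_cast
  ring


/-- For smooth `f : ℝ × ℝⁿ → ℂ` and
`F(θ,y) = (cos θ)^{-n/2} e^{-s‖y‖² tan θ} f(tan θ, sec θ • y)` on `(-π/2,π/2) × ℝⁿ`,
the operator `∂_{xⱼ}` on the noncompact picture corresponds to
`2syⱼ sin θ + cos θ ∂_{yⱼ}` on the compact picture:
`(cos θ)^{-n/2} e^{-s‖y‖² tan θ} (∂f/∂xⱼ)(tan θ, sec θ • y)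
  = 2syⱼ(sin θ) F(θ,y) + (cos θ)(∂F/∂yⱼ)(θ,y)`. -/
theorem stmt18 (n : ℕ) (hn : 1 ≤ n) (s : ℂ)
    (f : ℝ × E n → ℂ) (hf : ContDiff ℝ (⊤ : ℕ∞) f)
    (F : ℝ → E n → ℂ)
    (hF : ∀ (θ : ℝ) (y : E n), F θ y =
      ((Real.cos θ ^ (-(n : ℝ) / 2) : ℝ) : ℂ) *
        Complex.exp (-s * ((‖y‖ : ℝ) : ℂ) ^ 2 * ((Real.tan θ : ℝ) : ℂ)) *
        f (Real.tan θ, (Real.cos θ)⁻¹ • y)) :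
    ∀ j : Fin n, ∀ θ ∈ Set.Ioo (-(Real.pi / 2)) (Real.pi / 2), ∀ y : E n,
      ((Real.cos θ ^ (-(n : ℝ) / 2) : ℝ) : ℂ) *
          Complex.exp (-s * ((‖y‖ : ℝ) : ℂ) ^ 2 * ((Real.tan θ : ℝ) : ℂ)) *
          fderiv ℝ f (Real.tan θ, (Real.cos θ)⁻¹ • y) (0, EuclideanSpace.single j 1)
        = 2 * s * ((y j : ℝ) : ℂ) * ((Real.sin θ : ℝ) : ℂ) * F θ y
          + ((Real.cos θ : ℝ) : ℂ) * pd j (fun y' : E n => F θ y') y := by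
  intro j θ hθ y
  have hc : 0 < Real.cos θ := Real.cos_pos_of_mem_Ioo hθ
  have hFfun : (fun y' : E n => F θ y') = fun y' : E n =>
      ((Real.cos θ ^ (-(n : ℝ) / 2) : ℝ) : ℂ) *
        Complex.exp (-s * ((‖y'‖ : ℝ) : ℂ) ^ 2 * ((Real.tan θ : ℝ) : ℂ)) *
        f (Real.tan θ, (Real.cos θ)⁻¹ • y') := funext fun y' => hF θ y'
  rw [hFfun, aux n s f hf j θ hc y, hF θ y]
  set t := Real.tan θ with htdef
  set r := (Real.cos θ)⁻¹ with hrdef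
  set c : ℂ := ((Real.cos θ ^ (-(n : ℝ) / 2) : ℝ) : ℂ)
  set ex : ℂ := Complex.exp (-s * ((‖y‖ : ℝ) : ℂ) ^ 2 * (t : ℂ))
  set fval : ℂ := f (t, r • y)
  set Df : ℂ := fderiv ℝ f (t, r • y) (0, EuclideanSpace.single j 1)
  have hct : ((Real.cos θ : ℝ) : ℂ) * (t : ℂ) = ((Real.sin θ : ℝ) : ℂ) := by
    have h : Real.cos θ * t = Real.sin θ := by
      rw [htdef, Real.tan_eq_sin_div_cos, mul_div_cancel₀ _ hc.ne']
    exact_mod_cast congrArg Complex.ofReal h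
  have hcr : ((Real.cos θ : ℝ) : ℂ) * (r : ℂ) = 1 := by
    rw [hrdef, ← Complex.ofReal_mul, mul_inv_cancel₀ hc.ne', Complex.ofReal_one]
  linear_combination (2 * s * ((y j : ℝ) : ℂ) * c * ex * fval) * hct - (c * ex * Df) * hcr

end
end
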